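/- arXiv:2007.03476 — 3 statements merged into one kernel-verified Lean document; each statement's English description precedes it below -/
import Mathlib

section
/- For any group G acting on itself by conjugation, there is a group homomorphism κ : G ⊗ G → [G,G] (the commutator subgroup) with κ(g ⊗ h) = [g,h] = g h g⁻¹ h⁻¹ for all g, h ∈ G. -/
/-- Defining relations of the nonabelian tensor square `G ⊗ G`
(conjugation actions, left convention `ᵍx = g x g⁻¹`). -/
def tensorRels (G : Type*) [Group G] : Set (FreeGroup (G × G)) :=
  { r | (∃ g g' h : G, r = FreeGroup.of (g * g', h) *
          (FreeGroup.of (g * g' * g⁻¹, g * h * g⁻¹) * FreeGroup.of (g, h))⁻¹) ∨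
        (∃ g h h' : G, r = FreeGroup.of (g, h * h') *
          (FreeGroup.of (g, h) * FreeGroup.of (h * g * h⁻¹, h * h' * h⁻¹))⁻¹) }

/-- The nonabelian tensor square `G ⊗ G`. -/
def TensorSquare (G : Type*) [Group G] := PresentedGroup (tensorRels G)

instance (G : Type*) [Group G] : Group (TensorSquare G) := by
  unfold TensorSquare; infer_instance

/-- The generator `g ⊗ h` of `G ⊗ G`. -/
def tensorOf {G : Type*} [Group G] (g h : G) : TensorSquare G := PresentedGroup.of (g, h)

/-- The set of elements `x ⊗ x` generating `∇(G)`. -/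
def nablaSet (G : Type*) [Group G] : Set (TensorSquare G) := { t | ∃ x : G, t = tensorOf x x }

/-- The exterior square `G ∧ G = (G ⊗ G)/∇(G)`. -/
def ExtSquare (G : Type*) [Group G] :=
  TensorSquare G ⧸ Subgroup.normalClosure (nablaSet G)

instance (G : Type*) [Group G] : Group (ExtSquare G) := by
  unfold ExtSquare; infer_instance

/-- The element `g ∧ h` of `G ∧ G`. -/
def wedge {G : Type*} [Group G] (g h : G) : ExtSquare G := QuotientGroup.mk (tensorOf g h)

/-- `M₀(G) ≤ G ∧ G`: the subgroup generated by `x ∧ y` with `[x,y] = 1`. -/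
def M0 (G : Type*) [Group G] : Subgroup (ExtSquare G) :=
  Subgroup.closure { t | ∃ x y : G, x * y = y * x ∧ t = wedge x y }

/-!
The defining relations of `G ⊗ G` are the expansion rules `[gg', h] = [ᵍg', ᵍh][g, h]` and
`[g, hh'] = [g, h][ʰg, ʰh']` of commutators, so `g ⊗ h ↦ [g, h]` factors through the presentation.
-/

open scoped commutatorElement

section Commutator

variable {G : Type*} [Group G]

theorem commutatorElement_mem_commutator (g h : G) : ⁅g, h⁆ ∈ commutator G :=
  Subgroup.commutator_mem_commutator (Subgroup.mem_top g) (Subgroup.mem_top h)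

theorem commutatorElement_mul_left_eq_conj_conj_mul (g g' h : G) :
    ⁅g * g', h⁆ = ⁅g * g' * g⁻¹, g * h * g⁻¹⁆ * ⁅g, h⁆ := by
  rw [commutatorElement_mul_left_eq_conj_mul, conjugate_commutatorElement]

theorem commutatorElement_mul_right_eq_mul_conj_conj (g h h' : G) :
    ⁅g, h * h'⁆ = ⁅g, h⁆ * ⁅h * g * h⁻¹, h * h' * h⁻¹⁆ := by
  rw [commutatorElement_mul_right_eq_mul_conj, mul_assoc _ h, mul_assoc, conjugate_commutatorElement]

def commutatorOfPair (p : G × G) : commutator G :=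
  ⟨⁅p.1, p.2⁆, commutatorElement_mem_commutator p.1 p.2⟩

theorem lift_commutatorOfPair_eq_one_of_mem_tensorRels {r : FreeGroup (G × G)}
    (hr : r ∈ tensorRels G) : FreeGroup.lift commutatorOfPair r = 1 := by
  rcases hr with ⟨g, g', h, rfl⟩ | ⟨g, h, h', rfl⟩
  all_goals
    simp only [map_mul, map_inv, FreeGroup.lift_apply_of, mul_inv_eq_one]
    ext
    simp only [commutatorOfPair, Subgroup.coe_mul]
  · exact commutatorElement_mul_left_eq_conj_conj_mul g g' h
  · exact commutatorElement_mul_right_eq_mul_conj_conj g h h'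

end Commutator

namespace TensorSquare

variable (G : Type*) [Group G]

def commutatorHom : TensorSquare G →* commutator G :=
  PresentedGroup.toGroup fun _ => lift_commutatorOfPair_eq_one_of_mem_tensorRels

variable {G}

@[simp]
theorem commutatorHom_tensorOf (g h : G) : (commutatorHom G (tensorOf g h) : G) = ⁅g, h⁆ :=
  congrArg Subtype.val (PresentedGroup.toGroup.of _)

end TensorSquare

/-- There is a group homomorphism `κ : G ⊗ G → [G,G]` with `κ(g ⊗ h) = g h g⁻¹ h⁻¹`. -/
theorem exists_kappa_tensor (G : Type*) [Group G] :
    ∃ κ : TensorSquare G →* (commutator G), ∀ g h : G,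
      (κ (tensorOf g h) : G) = g * h * g⁻¹ * h⁻¹ :=
  ⟨TensorSquare.commutatorHom G, fun g h => TensorSquare.commutatorHom_tensorOf g h⟩
end

section
/- Let G be a finite group with exterior square G ∧ G, Schur multiplier M(G) = ker(κ : G ∧ G → [G,G]), and let M₀(G) ≤ M(G) be the subgroup generated by all x ∧ y with x, y ∈ G commuting. If M(G) = M₀(G) (i.e., the Bogomolov multiplier B₀(G) = M(G)/M₀(G) is trivial), then the exponent of M(G) divides the exponent of G. -/
/-!
Every element of `M(G) = ker κ` is central in `G ∧ G`: a generator `g ∧ h` conjugates `a ∧ b` to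
`ᶜa ∧ ᶜb` with `c = [g, h]`, so anything in `ker κ` acts trivially on the generators. Hence if
`M(G) = M₀(G)`, then `M(G)` is generated by central elements `x ∧ y` with `[x, y] = 1`, and for
those `(x ∧ y)ⁿ = xⁿ ∧ y`, which vanishes when `n = exp G`.
-/

theorem Subgroup.exponent_closure_dvd {M : Type*} [Group M] {s : Set M} {n : ℕ}
    (hs : s ⊆ Subgroup.center M) (hpow : ∀ x ∈ s, x ^ n = 1) :
    Monoid.exponent (Subgroup.closure s) ∣ n := by
  refine Monoid.exponent_dvd_of_forall_pow_eq_one fun ⟨x, hx⟩ => Subtype.ext ?_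
  have h_central : Subgroup.closure s ≤ Subgroup.center M := Subgroup.closure_le _ |>.mpr hs
  simp only [Subgroup.coe_pow, Subgroup.coe_one]
  induction hx using Subgroup.closure_induction with
  | mem x hx => exact hpow x hx
  | one => exact one_pow n
  | mul x y hx _ hx' hy' =>
    have hxy : Commute x y := (Subgroup.mem_center_iff.mp (h_central hx) y).symm
    rw [hxy.mul_pow, hx', hy', one_mul]
  | inv x _ hx' => rw [inv_pow, hx', inv_one]

namespace ExtSquare

variable {G : Type*} [Group G]

lemma tensorOf_mul_left (g g' h : G) :
    tensorOf (g * g') h = tensorOf (g * g' * g⁻¹) (g * h * g⁻¹) * tensorOf g h :=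
  PresentedGroup.mk_eq_mk_of_mul_inv_mem (Or.inl ⟨g, g', h, rfl⟩)

lemma tensorOf_mul_right (g h h' : G) :
    tensorOf g (h * h') = tensorOf g h * tensorOf (h * g * h⁻¹) (h * h' * h⁻¹) :=
  PresentedGroup.mk_eq_mk_of_mul_inv_mem (Or.inr ⟨g, h, h', rfl⟩)

def mk : TensorSquare G →* ExtSquare G := QuotientGroup.mk' _

lemma mk_surjective : Function.Surjective (mk : TensorSquare G →* ExtSquare G) :=
  QuotientGroup.mk'_surjective _

lemma wedge_eq_mk (g h : G) : wedge g h = mk (tensorOf g h) := rfl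

lemma wedge_mul_left (g g' h : G) :
    wedge (g * g') h = wedge (g * g' * g⁻¹) (g * h * g⁻¹) * wedge g h := by
  rw [wedge_eq_mk, wedge_eq_mk, wedge_eq_mk, ← map_mul, tensorOf_mul_left]

lemma wedge_mul_right (g h h' : G) :
    wedge g (h * h') = wedge g h * wedge (h * g * h⁻¹) (h * h' * h⁻¹) := by
  rw [wedge_eq_mk, wedge_eq_mk, wedge_eq_mk, ← map_mul, tensorOf_mul_right]

@[simp]
lemma wedge_one_left (h : G) : wedge 1 h = 1 := by
  simpa using wedge_mul_left (1 : G) 1 h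

lemma wedge_pow_left_of_commute {x y : G} (hxy : Commute x y) (n : ℕ) :
    wedge x y ^ n = wedge (x ^ n) y := by
  induction n with
  | zero => simp
  | succ n ih =>
    rw [pow_succ, ih, pow_succ', wedge_mul_left, ← pow_succ', pow_succ, mul_inv_cancel_right,
      hxy.eq, mul_inv_cancel_right]

lemma closure_wedge_eq_top :
    Subgroup.closure {t : ExtSquare G | ∃ g h : G, t = wedge g h} = ⊤ := by
  rw [eq_top_iff]
  rintro s -
  obtain ⟨t, rfl⟩ := mk_surjective s
  exact PresentedGroup.generated_by (tensorRels G)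
    (Subgroup.comap mk (Subgroup.closure {t : ExtSquare G | ∃ g h : G, t = wedge g h}))
    (fun p => Subgroup.subset_closure ⟨p.1, p.2, rfl⟩) t

/-- Expanding `(g g') ∧ (h h')` in the two possible orders. -/
lemma wedge_conj_mul_wedge (g h g' h' : G) :
    wedge (g * h * g' * (g * h)⁻¹) (g * h * h' * (g * h)⁻¹) * wedge g h
      = wedge g h * wedge (h * g * g' * (h * g)⁻¹) (h * g * h' * (h * g)⁻¹) := by
  have left_first : wedge (g * g') (h * h') = wedge (g * g' * g⁻¹) (g * h * g⁻¹)
      * wedge (g * h * g' * (g * h)⁻¹) (g * h * h' * (g * h)⁻¹)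
      * wedge g h * wedge (h * g * h⁻¹) (h * h' * h⁻¹) := by
    rw [wedge_mul_left g g' (h * h'), wedge_mul_right g h h',
      show g * (h * h') * g⁻¹ = g * h * g⁻¹ * (g * h' * g⁻¹) by group,
      wedge_mul_right (g * g' * g⁻¹) (g * h * g⁻¹) (g * h' * g⁻¹),
      show g * h * g⁻¹ * (g * g' * g⁻¹) * (g * h * g⁻¹)⁻¹ = g * h * g' * (g * h)⁻¹ by group,
      show g * h * g⁻¹ * (g * h' * g⁻¹) * (g * h * g⁻¹)⁻¹ = g * h * h' * (g * h)⁻¹ by group]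
    group
  have right_first : wedge (g * g') (h * h') = wedge (g * g' * g⁻¹) (g * h * g⁻¹) * wedge g h
      * wedge (h * g * g' * (h * g)⁻¹) (h * g * h' * (h * g)⁻¹)
      * wedge (h * g * h⁻¹) (h * h' * h⁻¹) := by
    rw [wedge_mul_right (g * g') h h', wedge_mul_left g g' h,
      show h * (g * g') * h⁻¹ = h * g * h⁻¹ * (h * g' * h⁻¹) by group,
      wedge_mul_left (h * g * h⁻¹) (h * g' * h⁻¹) (h * h' * h⁻¹),
      show h * g * h⁻¹ * (h * g' * h⁻¹) * (h * g * h⁻¹)⁻¹ = h * g * g' * (h * g)⁻¹ by group,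
      show h * g * h⁻¹ * (h * h' * h⁻¹) * (h * g * h⁻¹)⁻¹ = h * g * h' * (h * g)⁻¹ by group]
    group
  have h_eq := left_first.symm.trans right_first
  simp only [mul_assoc, mul_right_inj] at h_eq
  simpa only [← mul_assoc, mul_left_inj] using h_eq

lemma wedge_mul_wedge_mul_inv (g h a b : G) :
    wedge g h * wedge a b * (wedge g h)⁻¹
      = wedge (g * h * g⁻¹ * h⁻¹ * a * (g * h * g⁻¹ * h⁻¹)⁻¹)
          (g * h * g⁻¹ * h⁻¹ * b * (g * h * g⁻¹ * h⁻¹)⁻¹) := by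
  have h_eq := wedge_conj_mul_wedge g h ((h * g)⁻¹ * a * (h * g)) ((h * g)⁻¹ * b * (h * g))
  rw [show h * g * ((h * g)⁻¹ * a * (h * g)) * (h * g)⁻¹ = a by group,
    show h * g * ((h * g)⁻¹ * b * (h * g)) * (h * g)⁻¹ = b by group,
    show g * h * ((h * g)⁻¹ * a * (h * g)) * (g * h)⁻¹
      = g * h * g⁻¹ * h⁻¹ * a * (g * h * g⁻¹ * h⁻¹)⁻¹ by group,
    show g * h * ((h * g)⁻¹ * b * (h * g)) * (g * h)⁻¹
      = g * h * g⁻¹ * h⁻¹ * b * (g * h * g⁻¹ * h⁻¹)⁻¹ by group] at h_eq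
  rw [← h_eq, mul_inv_cancel_right]

variable (κ : ExtSquare G →* G)

lemma mul_wedge_mul_inv (hκ : ∀ g h : G, κ (wedge g h) = g * h * g⁻¹ * h⁻¹)
    (t : ExtSquare G) (a b : G) :
    t * wedge a b * t⁻¹ = wedge (κ t * a * (κ t)⁻¹) (κ t * b * (κ t)⁻¹) := by
  have ht : t ∈ Subgroup.closure {t : ExtSquare G | ∃ g h : G, t = wedge g h} := by
    rw [closure_wedge_eq_top]; exact Subgroup.mem_top t
  induction ht using Subgroup.closure_induction generalizing a b with
  | mem x hx =>
    obtain ⟨g, h, rfl⟩ := hx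
    rw [wedge_mul_wedge_mul_inv, hκ]
  | one => simp
  | mul x y _ _ hx hy =>
    rw [show x * y * wedge a b * (x * y)⁻¹ = x * (y * wedge a b * y⁻¹) * x⁻¹ by group, hy, hx,
      map_mul]
    congr 1 <;> group
  | inv x _ hx =>
    have hx' := hx ((κ x)⁻¹ * a * κ x) ((κ x)⁻¹ * b * κ x)
    rw [show κ x * ((κ x)⁻¹ * a * κ x) * (κ x)⁻¹ = a by group,
      show κ x * ((κ x)⁻¹ * b * κ x) * (κ x)⁻¹ = b by group] at hx'
    rw [← hx', map_inv]
    group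

lemma mem_center_of_mem_ker (hκ : ∀ g h : G, κ (wedge g h) = g * h * g⁻¹ * h⁻¹)
    {t : ExtSquare G} (ht : t ∈ κ.ker) :
    t ∈ Subgroup.center (ExtSquare G) := by
  rw [← Subgroup.centralizer_univ, ← Subgroup.coe_top, ← closure_wedge_eq_top,
    Subgroup.centralizer_closure, Subgroup.mem_centralizer_iff]
  rintro _ ⟨g, h, rfl⟩
  have h_conj := mul_wedge_mul_inv κ hκ t g h
  rw [MonoidHom.mem_ker.mp ht] at h_conj
  simp only [one_mul, inv_one, mul_one] at h_conj
  exact (mul_inv_eq_iff_eq_mul.mp h_conj).symm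

end ExtSquare

theorem exponent_schurMultiplier_dvd_of_bogomolov_trivial_general (G : Type*) [Group G]
    (κ : ExtSquare G →* G) (hκ : ∀ g h : G, κ (wedge g h) = g * h * g⁻¹ * h⁻¹)
    (htrivial : κ.ker = M0 G) :
    Monoid.exponent κ.ker ∣ Monoid.exponent G := by
  rw [htrivial]
  refine Subgroup.exponent_closure_dvd ?_ ?_
  · rintro _ ⟨x, y, hxy, rfl⟩
    refine ExtSquare.mem_center_of_mem_ker κ hκ ?_
    rw [MonoidHom.mem_ker, hκ, hxy, mul_inv_cancel_right, mul_inv_cancel]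
  · rintro _ ⟨x, y, hxy, rfl⟩
    rw [ExtSquare.wedge_pow_left_of_commute hxy, Monoid.pow_exponent_eq_one,
      ExtSquare.wedge_one_left]

/-- If the Bogomolov multiplier is trivial, i.e. `M(G) = M₀(G)`, then
`exp(M(G)) ∣ exp(G)` for a finite group `G`. -/
theorem exponent_schurMultiplier_dvd_of_bogomolov_trivial (G : Type*) [Group G] [Finite G]
    (κ : ExtSquare G →* G) (hκ : ∀ g h : G, κ (wedge g h) = g * h * g⁻¹ * h⁻¹)
    (htrivial : κ.ker = M0 G) :
    Monoid.exponent κ.ker ∣ Monoid.exponent G :=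
  exponent_schurMultiplier_dvd_of_bogomolov_trivial_general G κ hκ htrivial
end

section
/- If G is a finite p-group of nilpotency class at most 2 and p is odd, then exp(G ∧ G) divides exp(G), and consequently exp(M(G)) divides exp(G). -/
/-! In class two every commutator `⁅g, h⁆` is central. Expanding `(u * v) ∧ (h * y)` with the
two defining relations in either order shows that conjugation by `u ∧ h` acts on `G ∧ G` as
conjugation by `⁅u, h⁆` does on the arguments, so `G ∧ G` is abelian. The relations also give
`x ^ n ∧ h = (x ∧ ⁅x, h⁆) ^ (n.choose 2) * (x ∧ h) ^ n`; for `n = exp G` odd, `n ∣ n.choose 2`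
and `(x ∧ ⁅x, h⁆) ^ n = x ∧ ⁅x, h⁆ ^ n = 1`, so every generator `x ∧ h` has order dividing `n`. -/

section

open Subgroup hiding closure
open scoped commutatorElement

variable {G : Type*} [Group G]

theorem wedge_mul_left (g g' h : G) :
    wedge (g * g') h = wedge (g * g' * g⁻¹) (g * h * g⁻¹) * wedge g h := by
  have hrel : FreeGroup.of (g * g', h) *
      (FreeGroup.of (g * g' * g⁻¹, g * h * g⁻¹) * FreeGroup.of (g, h))⁻¹ ∈
        normalClosure (tensorRels G) :=
    subset_normalClosure (Or.inl ⟨g, g', h, rfl⟩)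
  have := congrArg (QuotientGroup.mk (s := normalClosure (nablaSet G)))
    ((QuotientGroup.eq_one_iff _).2 hrel)
  exact mul_inv_eq_one.1 this

theorem wedge_mul_right (g h h' : G) :
    wedge g (h * h') = wedge g h * wedge (h * g * h⁻¹) (h * h' * h⁻¹) := by
  have hrel : FreeGroup.of (g, h * h') *
      (FreeGroup.of (g, h) * FreeGroup.of (h * g * h⁻¹, h * h' * h⁻¹))⁻¹ ∈
        normalClosure (tensorRels G) :=
    subset_normalClosure (Or.inr ⟨g, h, h', rfl⟩)
  have := congrArg (QuotientGroup.mk (s := normalClosure (nablaSet G)))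
    ((QuotientGroup.eq_one_iff _).2 hrel)
  exact mul_inv_eq_one.1 this

theorem closure_range_tensorOf :
    Subgroup.closure (Set.range (Function.uncurry (tensorOf (G := G)))) = ⊤ :=
  PresentedGroup.closure_range_of _

theorem closure_range_wedge :
    Subgroup.closure (Set.range (Function.uncurry (wedge (G := G)))) = ⊤ := by
  let π : TensorSquare G →* ExtSquare G := QuotientGroup.mk' (normalClosure (nablaSet G))
  have : Function.uncurry (wedge (G := G)) = π ∘ Function.uncurry tensorOf := rfl
  rw [this, Set.range_comp, ← MonoidHom.map_closure, closure_range_tensorOf,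
    ← MonoidHom.range_eq_map, MonoidHom.range_eq_top]
  exact QuotientGroup.mk'_surjective _

theorem wedge_one_left (h : G) : wedge 1 h = 1 := by
  simpa using wedge_mul_left (1 : G) 1 h

theorem wedge_one_right (g : G) : wedge g 1 = 1 := by
  simpa using wedge_mul_right g (1 : G) 1

theorem wedge_conj_mul_wedge (u h v y : G) :
    wedge (u * h * v * (u * h)⁻¹) (u * h * y * (u * h)⁻¹) * wedge u h =
      wedge u h * wedge (h * u * v * (h * u)⁻¹) (h * u * y * (h * u)⁻¹) := by
  have expand_left := wedge_mul_left u v (h * y)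
  rw [show u * (h * y) * u⁻¹ = u * h * u⁻¹ * (u * y * u⁻¹) by group,
    wedge_mul_right (u * v * u⁻¹), wedge_mul_right u h y,
    show u * h * u⁻¹ * (u * v * u⁻¹) * (u * h * u⁻¹)⁻¹ = u * h * v * (u * h)⁻¹ by group,
    show u * h * u⁻¹ * (u * y * u⁻¹) * (u * h * u⁻¹)⁻¹ = u * h * y * (u * h)⁻¹ by group]
    at expand_left
  have expand_right := wedge_mul_right (u * v) h y
  rw [wedge_mul_left u v h, show h * (u * v) * h⁻¹ = h * u * h⁻¹ * (h * v * h⁻¹) by group,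
    wedge_mul_left (h * u * h⁻¹),
    show h * u * h⁻¹ * (h * v * h⁻¹) * (h * u * h⁻¹)⁻¹ = h * u * v * (h * u)⁻¹ by group,
    show h * u * h⁻¹ * (h * y * h⁻¹) * (h * u * h⁻¹)⁻¹ = h * u * y * (h * u)⁻¹ by group]
    at expand_right
  have := expand_left.symm.trans expand_right
  simp only [mul_assoc, mul_right_inj] at this
  simpa only [← mul_assoc, mul_left_inj] using this

theorem commutatorElement_mem_center_of_commutator_le (hG : commutator G ≤ center G) (g h : G) :
    ⁅g, h⁆ ∈ center G :=
  hG (commutator_mem_commutator (mem_top g) (mem_top h))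

theorem wedge_commute_of_commutator_le (hG : commutator G ≤ center G) (a b u h : G) :
    Commute (wedge a b) (wedge u h) := by
  have conj_eq (x : G) : u * h * x * (u * h)⁻¹ = h * u * x * (h * u)⁻¹ := by
    have hc := mem_center_iff.1 (commutatorElement_mem_center_of_commutator_le hG u h)
      (h * u * x * (h * u)⁻¹)
    calc u * h * x * (u * h)⁻¹ = ⁅u, h⁆ * (h * u * x * (h * u)⁻¹) * ⁅u, h⁆⁻¹ := by
          rw [commutatorElement_def]; group
      _ = h * u * x * (h * u)⁻¹ := by rw [← hc, mul_inv_cancel_right]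
  have := wedge_conj_mul_wedge u h ((h * u)⁻¹ * a * (h * u)) ((h * u)⁻¹ * b * (h * u))
  simp only [conj_eq, show ∀ x, h * u * ((h * u)⁻¹ * x * (h * u)) * (h * u)⁻¹ = x by
    intro; group] at this
  exact this

theorem extSquare_commute_of_commutator_le (hG : commutator G ≤ center G)
    (s t : ExtSquare G) : Commute s t := by
  have wedge_mem_center : Set.range (Function.uncurry (wedge (G := G))) ⊆ center (ExtSquare G) := by
    rintro _ ⟨⟨a, b⟩, rfl⟩
    rw [center_eq_iInf closure_range_wedge]
    simp only [SetLike.mem_coe, mem_iInf, mem_centralizer_singleton_iff]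
    rintro _ ⟨⟨u, h⟩, rfl⟩
    exact wedge_commute_of_commutator_le hG a b u h
  have hs : s ∈ center (ExtSquare G) :=
    (Subgroup.closure_le _).2 wedge_mem_center (by rw [closure_range_wedge]; exact mem_top s)
  exact (mem_center_iff.1 hs t).symm

theorem exponent_extSquare_dvd_of_wedge_pow_eq_one (hG : commutator G ≤ center G) {n : ℕ}
    (hn : ∀ g h : G, wedge g h ^ n = 1) : Monoid.exponent (ExtSquare G) ∣ n := by
  refine Monoid.exponent_dvd_of_forall_pow_eq_one fun t ↦ ?_
  have ht : t ∈ Subgroup.closure (Set.range (Function.uncurry (wedge (G := G)))) := by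
    rw [closure_range_wedge]; exact mem_top t
  induction ht using Subgroup.closure_induction with
  | mem _ hx => obtain ⟨⟨g, h⟩, rfl⟩ := hx; exact hn g h
  | one => exact one_pow n
  | mul x y _ _ hx hy => rw [(extSquare_commute_of_commutator_le hG x y).mul_pow, hx, hy, one_mul]
  | inv x _ hx => rw [inv_pow, hx, inv_one]

section Central

variable {z : G} (hz : z ∈ center G)
include hz

theorem wedge_mul_right_of_mem_center (g h : G) : wedge g (z * h) = wedge g z * wedge g h := by
  have hconj : ∀ x, z * x * z⁻¹ = x := fun x ↦ by rw [← mem_center_iff.1 hz x, mul_inv_cancel_right]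
  rw [wedge_mul_right, hconj, hconj]

theorem wedge_pow_right_of_mem_center (g : G) (k : ℕ) : wedge g (z ^ k) = wedge g z ^ k := by
  induction k with
  | zero => rw [pow_zero, pow_zero, wedge_one_right]
  | succ k ih => rw [pow_succ', wedge_mul_right_of_mem_center hz, ih, pow_succ']

theorem wedge_pow_left_of_mem_center (g : G) (k : ℕ) : wedge (g ^ k) z = wedge g z ^ k := by
  induction k with
  | zero => rw [pow_zero, pow_zero, wedge_one_left]
  | succ k ih =>
    rw [pow_succ', wedge_mul_left, ← pow_succ', pow_succ, mul_inv_cancel_right,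
      mem_center_iff.1 hz g, mul_inv_cancel_right, ih, pow_succ]

end Central

theorem wedge_pow_left_of_commutator_le (hG : commutator G ≤ center G) (g h : G) (k : ℕ) :
    wedge (g ^ k) h = wedge g ⁅g, h⁆ ^ k.choose 2 * wedge g h ^ k := by
  have hc := commutatorElement_mem_center_of_commutator_le hG g h
  induction k with
  | zero => rw [pow_zero, wedge_one_left, Nat.choose_zero_succ, pow_zero, pow_zero, one_mul]
  | succ k ih =>
    rw [pow_succ', wedge_mul_left, ← pow_succ', pow_succ, mul_inv_cancel_right,
      show g * h * g⁻¹ = ⁅g, h⁆ * h by rw [commutatorElement_def]; group,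
      wedge_mul_right_of_mem_center hc, wedge_pow_left_of_mem_center hc, ih,
      Nat.choose_succ_succ, Nat.choose_one_right, pow_add, pow_succ]
    simp only [mul_assoc]

theorem exponent_extSquare_dvd_of_odd (hG : commutator G ≤ center G) {n : ℕ} (hn : Odd n)
    (hGn : Monoid.exponent G ∣ n) : Monoid.exponent (ExtSquare G) ∣ n := by
  have pow_n := Monoid.exponent_dvd_iff_forall_pow_eq_one.1 hGn
  have choose_two : n.choose 2 = n * ((n - 1) / 2) := by
    rw [Nat.choose_two_right, Nat.mul_div_assoc _ (Nat.Odd.sub_odd hn odd_one).two_dvd]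
  refine exponent_extSquare_dvd_of_wedge_pow_eq_one hG fun g h ↦ ?_
  have hc := commutatorElement_mem_center_of_commutator_le hG g h
  have := wedge_pow_left_of_commutator_le hG g h n
  rw [pow_n, wedge_one_left, choose_two, pow_mul, ← wedge_pow_right_of_mem_center hc, pow_n,
    wedge_one_right, one_pow, one_mul] at this
  exact this.symm

end

theorem exponent_extSquare_dvd_of_class_two_general (G : Type*) [Group G] [Finite G]
    (p : ℕ) (hp : p.Prime) (hodd : p ≠ 2) (hpG : IsPGroup p G)
    (hclass : commutator G ≤ Subgroup.center G)
    (κ : ExtSquare G →* G) :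
    Monoid.exponent (ExtSquare G) ∣ Monoid.exponent G ∧
      Monoid.exponent κ.ker ∣ Monoid.exponent G := by
  have odd_exponent : Odd (Monoid.exponent G) := by
    have : Fact p.Prime := ⟨hp⟩
    obtain ⟨k, hk⟩ := hpG.exists_exponent_eq_pow
    exact hk ▸ (hp.odd_of_ne_two hodd).pow
  have hext := exponent_extSquare_dvd_of_odd hclass odd_exponent dvd_rfl
  exact ⟨hext, (Monoid.exponent_dvd_of_monoidHom _ κ.ker.subtype_injective).trans hext⟩

/-- For a finite `p`-group of nilpotency class at most 2 (i.e. `[G,G] ≤ Z(G)`) with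
`p` odd, `exp(G ∧ G) ∣ exp G`, and consequently `exp(M(G)) ∣ exp G`. -/
theorem exponent_extSquare_dvd_of_class_two (G : Type*) [Group G] [Finite G]
    (p : ℕ) (hp : p.Prime) (hodd : p ≠ 2) (hpG : IsPGroup p G)
    (hclass : commutator G ≤ Subgroup.center G)
    (κ : ExtSquare G →* G) (hκ : ∀ g h : G, κ (wedge g h) = g * h * g⁻¹ * h⁻¹) :
    Monoid.exponent (ExtSquare G) ∣ Monoid.exponent G ∧
      Monoid.exponent κ.ker ∣ Monoid.exponent G :=
  exponent_extSquare_dvd_of_class_two_general G p hp hodd hpG hclass κ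
end
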